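/- Assume f satisfies one of: (a) f : [A, ∞) → ℝ is monotone increasing with A < 0 and f(A) > 0; (b) f : (−∞, B] → ℝ is monotone increasing with B > 0 and f(B) < 0. Suppose that for each ε > 0, φ_ε is a C² function on [−1,1] (with values in the domain of f) solving ε φ_ε''(x) = f(φ_ε(x)) for x ∈ (−1,1). Then sup_{ε > 0} ‖φ_ε‖_{L^∞} = ∞; that is, no family of solutions can be bounded in the sup-norm uniformly in ε. -/
import Mathlib


open Set Filter

/-- Lemma: if f is monotone increasing on its domain, which is either
[A,∞) with A < 0 and f(A) > 0, or (−∞,B] with B > 0 and f(B) < 0, and if for each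
ε > 0, φ_ε is a C² function on [−1,1] with values in the domain of f solving
ε φ_ε'' = f(φ_ε) on (−1,1), then sup_{ε>0} ‖φ_ε‖_{L^∞} = ∞: no such family is
uniformly bounded in the sup-norm. -/
theorem stmt_19
    (f : ℝ → ℝ) (dom : Set ℝ)
    (hmono : MonotoneOn f dom)
    (hdom : (∃ A : ℝ, A < 0 ∧ dom = Ici A ∧ 0 < f A) ∨
            (∃ B : ℝ, 0 < B ∧ dom = Iic B ∧ f B < 0))
    (Φ dΦ ddΦ : ℝ → ℝ → ℝ)
    (hsol : ∀ ε : ℝ, 0 < ε →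
      (∀ x ∈ Icc (-1:ℝ) 1, HasDerivWithinAt (Φ ε) (dΦ ε x) (Icc (-1:ℝ) 1) x) ∧
      (∀ x ∈ Icc (-1:ℝ) 1, HasDerivWithinAt (dΦ ε) (ddΦ ε x) (Icc (-1:ℝ) 1) x) ∧
      ContinuousOn (ddΦ ε) (Icc (-1:ℝ) 1) ∧
      (∀ x ∈ Icc (-1:ℝ) 1, Φ ε x ∈ dom) ∧
      (∀ x ∈ Ioo (-1:ℝ) 1, ε * ddΦ ε x = f (Φ ε x))) :
    ¬ ∃ C : ℝ, ∀ ε : ℝ, 0 < ε → ∀ x ∈ Icc (-1:ℝ) 1, |Φ ε x| ≤ C := by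
  rintro ⟨C, hC⟩
  obtain ⟨δ, hδ, hfb⟩ : ∃ δ : ℝ, 0 < δ ∧ ∀ y ∈ dom, δ ≤ |f y| := by
    rcases hdom with ⟨A, hA, hdomA, hfA⟩ | ⟨B, hB, hdomB, hfB⟩
    · refine ⟨f A, hfA, fun y hy => ?_⟩
      have hA' : A ∈ dom := by rw [hdomA]; exact self_mem_Ici
      have h1 : f A ≤ f y := hmono hA' hy (by rw [hdomA] at hy; exact hy)
      exact h1.trans (le_abs_self _)
    · refine ⟨-f B, by linarith, fun y hy => ?_⟩
      have hB' : B ∈ dom := by rw [hdomB]; exact self_mem_Iic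
      have h1 : f y ≤ f B := hmono hy hB' (by rw [hdomB] at hy; exact hy)
      have h2 : -f y ≤ |f y| := neg_le_abs _
      linarith
  set C' : ℝ := max C 1 with hC'def
  have hC'1 : (1:ℝ) ≤ C' := le_max_right _ _
  have hC'0 : (0:ℝ) < C' := lt_of_lt_of_le one_pos hC'1
  have hCb : ∀ ε : ℝ, 0 < ε → ∀ x ∈ Icc (-1:ℝ) 1, |Φ ε x| ≤ C' :=
    fun ε hε x hx => (hC ε hε x hx).trans (le_max_left _ _)
  set ε : ℝ := δ / (16 * C') with hεdef
  have hε : 0 < ε := div_pos hδ (by positivity)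
  obtain ⟨h1, h2, h3, h4, h5⟩ := hsol ε hε
  have hd1 : ∀ x ∈ Ioo (-1:ℝ) 1, HasDerivAt (Φ ε) (dΦ ε x) x := fun x hx =>
    (h1 x (Ioo_subset_Icc_self hx)).hasDerivAt (Icc_mem_nhds hx.1 hx.2)
  have hd2 : ∀ x ∈ Ioo (-1:ℝ) 1, HasDerivAt (dΦ ε) (ddΦ ε x) x := fun x hx =>
    (h2 x (Ioo_subset_Icc_self hx)).hasDerivAt (Icc_mem_nhds hx.1 hx.2)
  have hc1 : ContinuousOn (Φ ε) (Icc (-1:ℝ) 1) := fun x hx => (h1 x hx).continuousWithinAt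
  have hc2 : ContinuousOn (dΦ ε) (Icc (-1:ℝ) 1) := fun x hx => (h2 x hx).continuousWithinAt
  -- MVT on [1/2, 1]
  obtain ⟨c₁, hc₁, hcv1⟩ := exists_hasDerivAt_eq_slope (Φ ε) (dΦ ε)
    (by norm_num : (1:ℝ)/2 < 1)
    (hc1.mono (Icc_subset_Icc (by norm_num) le_rfl))
    (fun x hx => hd1 x ⟨by linarith [hx.1], hx.2⟩)
  -- MVT on [-1, -1/2]
  obtain ⟨c₂, hc₂, hcv2⟩ := exists_hasDerivAt_eq_slope (Φ ε) (dΦ ε)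
    (by norm_num : (-1:ℝ) < -1/2)
    (hc1.mono (Icc_subset_Icc le_rfl (by norm_num)))
    (fun x hx => hd1 x ⟨hx.1, by linarith [hx.2]⟩)
  have hcv1' : dΦ ε c₁ = 2 * (Φ ε 1 - Φ ε (1/2)) := by rw [hcv1]; ring
  have hcv2' : dΦ ε c₂ = 2 * (Φ ε (-1/2) - Φ ε (-1)) := by rw [hcv2]; ring
  have b1 := abs_le.mp (hCb ε hε 1 (by constructor <;> norm_num))
  have b2 := abs_le.mp (hCb ε hε (1/2) (by constructor <;> norm_num))
  have b3 := abs_le.mp (hCb ε hε (-1/2) (by constructor <;> norm_num))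
  have b4 := abs_le.mp (hCb ε hε (-1) (by constructor <;> norm_num))
  have e1 : |dΦ ε c₁| ≤ 4 * C' := by
    rw [hcv1', abs_le]; constructor <;> [nlinarith [b1.1, b2.2]; nlinarith [b1.2, b2.1]]
  have e2 : |dΦ ε c₂| ≤ 4 * C' := by
    rw [hcv2', abs_le]; constructor <;> [nlinarith [b3.1, b4.2]; nlinarith [b3.2, b4.1]]
  have hc21 : c₂ < c₁ := by linarith [hc₁.1, hc₂.2]
  obtain ⟨d, hd, hdv⟩ := exists_hasDerivAt_eq_slope (dΦ ε) (ddΦ ε) hc21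
    (hc2.mono (Icc_subset_Icc (by linarith [hc₂.1]) (by linarith [hc₁.2])))
    (fun x hx => hd2 x ⟨by linarith [hc₂.1, hx.1], by linarith [hc₁.2, hx.2]⟩)
  have hdIoo : d ∈ Ioo (-1:ℝ) 1 := ⟨by linarith [hc₂.1, hd.1], by linarith [hc₁.2, hd.2]⟩
  have hden : (1:ℝ) ≤ c₁ - c₂ := by linarith [hc₁.1, hc₂.2]
  have hbd : |ddΦ ε d| ≤ 8 * C' := by
    rw [hdv, abs_div, abs_of_pos (by linarith : (0:ℝ) < c₁ - c₂)]
    have hnum : |dΦ ε c₁ - dΦ ε c₂| ≤ 8 * C' := by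
      have := abs_le.mp e1; have := abs_le.mp e2
      rw [abs_le]; constructor <;> linarith
    calc |dΦ ε c₁ - dΦ ε c₂| / (c₁ - c₂) ≤ |dΦ ε c₁ - dΦ ε c₂| :=
          div_le_self (abs_nonneg _) hden
      _ ≤ 8 * C' := hnum
  have hdd : ε * ddΦ ε d = f (Φ ε d) := h5 d hdIoo
  have hmem := h4 d (Ioo_subset_Icc_self hdIoo)
  have hlow : δ ≤ |f (Φ ε d)| := hfb _ hmem
  have hup : |f (Φ ε d)| ≤ δ / 2 := by
    rw [← hdd, abs_mul, abs_of_pos hε]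
    calc ε * |ddΦ ε d| ≤ ε * (8 * C') := by
          exact mul_le_mul_of_nonneg_left hbd hε.le
      _ = δ / 2 := by rw [hεdef]; field_simp; ring
  linarith
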